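/- Let K₁ ∈ B(H₁), K₂ ∈ B(H₂), let F₁ : Ω → H₁ and F₂ : Ω → H₂ be Bessel mappings with transform operators θ₁, θ₂, let θ be the transform operator of the continuous (K₁ ⊕ K₂)-frame F₁ ⊕ F₂, and set T = θ*, T₁ = θ₁*, T₂ = θ₂*. If G₁ ∈ B(H₁, L²(Ω, 𝕜)) and G₂ ∈ B(H₂, L²(Ω, 𝕜)) are such that G₁ ⊕ G₂ is a (K₁ ⊕ K₂)-dual mapping to F₁ ⊕ F₂ (i.e. K₁ ⊕ K₂ = T ∘ (G₁ ⊕ G₂)), then G₁ is a K₁-dual mapping to F₁ (i.e. K₁ = T₁ ∘ G₁) and G₂ is a K₂-dual mapping to F₂ (i.e. K₂ = T₂ ∘ G₂). -/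

import Mathlib

open MeasureTheory ContinuousLinearMap

/-- The direct sum operator `K₁ ⊕ K₂` on the super Hilbert space `H₁ ⊕ H₂`, mapping
`(u, v)` to `(K₁ u, K₂ v)`. -/
noncomputable def prodOp {𝕜 : Type*} [RCLike 𝕜]
    {H₁ : Type*} [NormedAddCommGroup H₁] [InnerProductSpace 𝕜 H₁]
    {H₂ : Type*} [NormedAddCommGroup H₂] [InnerProductSpace 𝕜 H₂]
    (K₁ : H₁ →L[𝕜] H₁) (K₂ : H₂ →L[𝕜] H₂) :
    WithLp 2 (H₁ × H₂) →L[𝕜] WithLp 2 (H₁ × H₂) :=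
  ((WithLp.prodContinuousLinearEquiv 2 𝕜 H₁ H₂).symm.toContinuousLinearMap).comp
    ((K₁.prodMap K₂).comp (WithLp.prodContinuousLinearEquiv 2 𝕜 H₁ H₂).toContinuousLinearMap)

/-- The operator `G₁ ⊕ G₂ : H₁ ⊕ H₂ →L E` mapping `(u, v)` to `G₁ u + G₂ v`. -/
noncomputable def coprodOp {𝕜 : Type*} [RCLike 𝕜]
    {H₁ : Type*} [NormedAddCommGroup H₁] [InnerProductSpace 𝕜 H₁]
    {H₂ : Type*} [NormedAddCommGroup H₂] [InnerProductSpace 𝕜 H₂]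
    {E : Type*} [NormedAddCommGroup E] [NormedSpace 𝕜 E]
    (G₁ : H₁ →L[𝕜] E) (G₂ : H₂ →L[𝕜] E) : WithLp 2 (H₁ × H₂) →L[𝕜] E :=
  (G₁.coprod G₂).comp (WithLp.prodContinuousLinearEquiv 2 𝕜 H₁ H₂).toContinuousLinearMap

/-! With `ι₁ u = (u, 0)` and `ι₂ v = (0, v)`, the isometries `ιᵢ` satisfy `ιᵢ† ιᵢ = 1`, and
`θ ιᵢ = θᵢ` because both represent `ω ↦ ⟪Fᵢ ω, ·⟫`. Since `(K₁ ⊕ K₂) ιᵢ = ιᵢ Kᵢ` and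
`(G₁ ⊕ G₂) ιᵢ = Gᵢ`, compressing the dual relation gives `Kᵢ = ιᵢ† θ† Gᵢ = (θ ιᵢ)† Gᵢ = θᵢ† Gᵢ`. -/

namespace ContinuousLinearMap

variable {𝕜 : Type*} [RCLike 𝕜]
  {H₁ : Type*} [NormedAddCommGroup H₁] [InnerProductSpace 𝕜 H₁] [CompleteSpace H₁]
  {H : Type*} [NormedAddCommGroup H] [InnerProductSpace 𝕜 H] [CompleteSpace H]
  {E : Type*} [NormedAddCommGroup E] [InnerProductSpace 𝕜 E] [CompleteSpace E]

theorem eq_adjoint_comp_comp_of_norm_map {ι : H₁ →L[𝕜] H} (hι : ∀ x, ‖ι x‖ = ‖x‖)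
    {θ : H →L[𝕜] E} {K : H₁ →L[𝕜] H₁} {G : H₁ →L[𝕜] E} (h : ι ∘L K = adjoint θ ∘L G) :
    K = adjoint (θ ∘L ι) ∘L G :=
  calc K = (adjoint ι ∘L ι) ∘L K := by
        rw [(norm_map_iff_adjoint_comp_self ι).mp hι, one_def, id_comp]
    _ = adjoint (θ ∘L ι) ∘L G := by rw [comp_assoc, h, adjoint_comp, comp_assoc]

end ContinuousLinearMap

section ProdEmbedding

variable (𝕜 : Type*) [RCLike 𝕜]
  (H₁ : Type*) [NormedAddCommGroup H₁] [InnerProductSpace 𝕜 H₁]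
  (H₂ : Type*) [NormedAddCommGroup H₂] [InnerProductSpace 𝕜 H₂]

noncomputable def prodInl : H₁ →L[𝕜] WithLp 2 (H₁ × H₂) :=
  (WithLp.prodContinuousLinearEquiv 2 𝕜 H₁ H₂).symm.toContinuousLinearMap ∘L inl 𝕜 H₁ H₂

noncomputable def prodInr : H₂ →L[𝕜] WithLp 2 (H₁ × H₂) :=
  (WithLp.prodContinuousLinearEquiv 2 𝕜 H₁ H₂).symm.toContinuousLinearMap ∘L inr 𝕜 H₁ H₂

variable {𝕜 H₁ H₂}

@[simp] theorem prodInl_apply (u : H₁) : prodInl 𝕜 H₁ H₂ u = WithLp.toLp 2 (u, 0) := rfl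

@[simp] theorem prodInr_apply (v : H₂) : prodInr 𝕜 H₁ H₂ v = WithLp.toLp 2 (0, v) := rfl

theorem norm_prodInl (u : H₁) : ‖prodInl 𝕜 H₁ H₂ u‖ = ‖u‖ := by simp

theorem norm_prodInr (v : H₂) : ‖prodInr 𝕜 H₁ H₂ v‖ = ‖v‖ := by simp

theorem prodOp_comp_prodInl (K₁ : H₁ →L[𝕜] H₁) (K₂ : H₂ →L[𝕜] H₂) :
    prodOp K₁ K₂ ∘L prodInl 𝕜 H₁ H₂ = prodInl 𝕜 H₁ H₂ ∘L K₁ := by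
  ext u; simp [prodOp]

theorem prodOp_comp_prodInr (K₁ : H₁ →L[𝕜] H₁) (K₂ : H₂ →L[𝕜] H₂) :
    prodOp K₁ K₂ ∘L prodInr 𝕜 H₁ H₂ = prodInr 𝕜 H₁ H₂ ∘L K₂ := by
  ext v; simp [prodOp]

variable {E : Type*} [NormedAddCommGroup E] [NormedSpace 𝕜 E]

theorem coprodOp_comp_prodInl (G₁ : H₁ →L[𝕜] E) (G₂ : H₂ →L[𝕜] E) :
    coprodOp G₁ G₂ ∘L prodInl 𝕜 H₁ H₂ = G₁ := by
  ext u; simp [coprodOp]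

theorem coprodOp_comp_prodInr (G₁ : H₁ →L[𝕜] E) (G₂ : H₂ →L[𝕜] E) :
    coprodOp G₁ G₂ ∘L prodInr 𝕜 H₁ H₂ = G₂ := by
  ext v; simp [coprodOp]

variable {Ω : Type*} [MeasurableSpace Ω] {μ : Measure Ω}
  {F₁ : Ω → H₁} {F₂ : Ω → H₂} {θ : WithLp 2 (H₁ × H₂) →L[𝕜] Lp 𝕜 2 μ}

theorem transform_comp_prodInl
    (hθ : ∀ x : WithLp 2 (H₁ × H₂), (θ x : Ω → 𝕜) =ᵐ[μ]
      fun ω => (inner 𝕜 (WithLp.toLp 2 (F₁ ω, F₂ ω)) x : 𝕜))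
    {θ₁ : H₁ →L[𝕜] Lp 𝕜 2 μ} (hθ₁ : ∀ u : H₁, (θ₁ u : Ω → 𝕜) =ᵐ[μ] fun ω => inner 𝕜 (F₁ ω) u) :
    θ ∘L prodInl 𝕜 H₁ H₂ = θ₁ := by
  ext1 u
  refine Lp.ext ((hθ _).trans ?_)
  simpa [WithLp.prod_inner_apply] using (hθ₁ u).symm

theorem transform_comp_prodInr
    (hθ : ∀ x : WithLp 2 (H₁ × H₂), (θ x : Ω → 𝕜) =ᵐ[μ]
      fun ω => (inner 𝕜 (WithLp.toLp 2 (F₁ ω, F₂ ω)) x : 𝕜))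
    {θ₂ : H₂ →L[𝕜] Lp 𝕜 2 μ} (hθ₂ : ∀ v : H₂, (θ₂ v : Ω → 𝕜) =ᵐ[μ] fun ω => inner 𝕜 (F₂ ω) v) :
    θ ∘L prodInr 𝕜 H₁ H₂ = θ₂ := by
  ext1 v
  refine Lp.ext ((hθ _).trans ?_)
  simpa [WithLp.prod_inner_apply] using (hθ₂ v).symm

end ProdEmbedding

theorem prod_dual_components
    {𝕜 : Type*} [RCLike 𝕜]
    {H₁ : Type*} [NormedAddCommGroup H₁] [InnerProductSpace 𝕜 H₁] [CompleteSpace H₁]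
    {H₂ : Type*} [NormedAddCommGroup H₂] [InnerProductSpace 𝕜 H₂] [CompleteSpace H₂]
    {Ω : Type*} [MeasurableSpace Ω] {μ : Measure Ω}
    (K₁ : H₁ →L[𝕜] H₁) (K₂ : H₂ →L[𝕜] H₂)
    (F₁ : Ω → H₁) (F₂ : Ω → H₂)
    (θ₁ : H₁ →L[𝕜] Lp 𝕜 2 μ)
    (hθ₁ : ∀ u : H₁, (θ₁ u : Ω → 𝕜) =ᵐ[μ] fun ω => (inner 𝕜 (F₁ ω) u : 𝕜))
    (θ₂ : H₂ →L[𝕜] Lp 𝕜 2 μ)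
    (hθ₂ : ∀ v : H₂, (θ₂ v : Ω → 𝕜) =ᵐ[μ] fun ω => (inner 𝕜 (F₂ ω) v : 𝕜))
    (θ : WithLp 2 (H₁ × H₂) →L[𝕜] Lp 𝕜 2 μ)
    (hθ : ∀ x : WithLp 2 (H₁ × H₂), (θ x : Ω → 𝕜) =ᵐ[μ]
      fun ω => (inner 𝕜 ((WithLp.equiv 2 (H₁ × H₂)).symm (F₁ ω, F₂ ω)) x : 𝕜))
    (G₁ : H₁ →L[𝕜] Lp 𝕜 2 μ) (G₂ : H₂ →L[𝕜] Lp 𝕜 2 μ)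
    (hdual : prodOp K₁ K₂ =
      (ContinuousLinearMap.adjoint θ).comp (coprodOp G₁ G₂)) :
    K₁ = (ContinuousLinearMap.adjoint θ₁).comp G₁ ∧
    K₂ = (ContinuousLinearMap.adjoint θ₂).comp G₂ := by
  have hdual₁ : prodInl 𝕜 H₁ H₂ ∘L K₁ = adjoint θ ∘L G₁ := by
    rw [← prodOp_comp_prodInl K₁ K₂, hdual, comp_assoc, coprodOp_comp_prodInl]
  have hdual₂ : prodInr 𝕜 H₁ H₂ ∘L K₂ = adjoint θ ∘L G₂ := by
    rw [← prodOp_comp_prodInr K₁ K₂, hdual, comp_assoc, coprodOp_comp_prodInr]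
  rw [← transform_comp_prodInl hθ hθ₁, ← transform_comp_prodInr hθ hθ₂]
  exact ⟨eq_adjoint_comp_comp_of_norm_map norm_prodInl hdual₁,
    eq_adjoint_comp_comp_of_norm_map norm_prodInr hdual₂⟩
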